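/- arXiv:2309.01807 — 8 statements merged into one kernel-verified Lean document; each statement's English description precedes it below -/
import Mathlib

section
/- Let Ω be a finite nonempty type and let p, q : Ω → ℝ satisfy p x > 0 and q x > 0 for all x, ∑_x p x = 1 and ∑_x q x = 1. Then the value ∑_x p x * Real.log (p x / q x) is the greatest value of the functional G(f) := ∑_x p x * Real.log (f x) − ∑_x q x * f x + 1 over all f : Ω → ℝ with f x > 0 for all x; that is, G(f) ≤ ∑_x p x * Real.log (p x / q x) for every such f, and G attains this value at f = fun x => p x / q x. -/
/-! Pointwise, `t ↦ a log t - b t` is concave with maximum at `t = a / b`; this is `log s ≤ s - 1`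
at `s = b t / a`. Summing over `Ω` and using `∑ p = 1` bounds the functional by
`∑ p log (p / q)`, and at `f = p / q` the term `∑ q f` collapses to `∑ p = 1`. -/

open Real

noncomputable def densityRatioObjective {Ω : Type*} [Fintype Ω] (p q f : Ω → ℝ) : ℝ :=
  (∑ x, p x * log (f x)) - (∑ x, q x * f x) + 1

lemma mul_log_sub_mul_le_mul_log_div {a b t : ℝ} (ha : 0 < a) (hb : 0 < b) (ht : 0 < t) :
    a * log t - b * t ≤ a * log (a / b) - a := by
  have hlog : log t - log (a / b) = log (b * t / a) := by
    rw [log_div (by positivity) ha.ne', log_div ha.ne' hb.ne', log_mul hb.ne' ht.ne']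
    ring
  calc a * log t - b * t = a * (log t - log (a / b)) + a * log (a / b) - b * t := by ring
    _ ≤ a * (b * t / a - 1) + a * log (a / b) - b * t := by
        rw [hlog]; gcongr; exact log_le_sub_one_of_pos (by positivity)
    _ = a * log (a / b) - a := by field_simp; ring

lemma densityRatioObjective_le {Ω : Type*} [Fintype Ω] {p q f : Ω → ℝ}
    (hp : ∀ x, 0 < p x) (hq : ∀ x, 0 < q x) (hf : ∀ x, 0 < f x) (hps : ∑ x, p x = 1) :
    densityRatioObjective p q f ≤ ∑ x, p x * log (p x / q x) := by
  have hsum : ∑ x, (p x * log (f x) - q x * f x) ≤ ∑ x, (p x * log (p x / q x) - p x) :=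
    Finset.sum_le_sum fun x _ => mul_log_sub_mul_le_mul_log_div (hp x) (hq x) (hf x)
  rw [Finset.sum_sub_distrib, Finset.sum_sub_distrib, hps] at hsum
  unfold densityRatioObjective
  linarith

lemma densityRatioObjective_div {Ω : Type*} [Fintype Ω] {p q : Ω → ℝ}
    (hq : ∀ x, 0 < q x) (hps : ∑ x, p x = 1) :
    densityRatioObjective p q (fun x => p x / q x) = ∑ x, p x * log (p x / q x) := by
  have hcancel : ∀ x, q x * (p x / q x) = p x := fun x => mul_div_cancel₀ _ (hq x).ne'
  simp only [densityRatioObjective, hcancel, hps, sub_add_cancel]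

theorem density_ratio_variational_max_general
    {Ω : Type*} [Fintype Ω]
    (p q : Ω → ℝ)
    (hp : ∀ x, 0 < p x) (hq : ∀ x, 0 < q x)
    (hps : ∑ x, p x = 1) :
    (∀ f : Ω → ℝ, (∀ x, 0 < f x) →
      (∑ x, p x * Real.log (f x)) - (∑ x, q x * f x) + 1
        ≤ ∑ x, p x * Real.log (p x / q x)) ∧
    ((∑ x, p x * Real.log (p x / q x)) - (∑ x, q x * (p x / q x)) + 1
        = ∑ x, p x * Real.log (p x / q x)) :=
  ⟨fun _ hf => densityRatioObjective_le hp hq hf hps, densityRatioObjective_div hq hps⟩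

/-- Finite-sample-space variational characterization of the density ratio:
the functional `G f = ∑ x, p x * log (f x) − ∑ x, q x * f x + 1` is maximized
over positive `f` by `f = p/q`, with maximal value `∑ x, p x * log (p x / q x)`
(the KL divergence). -/
theorem density_ratio_variational_max
    {Ω : Type*} [Fintype Ω] [Nonempty Ω]
    (p q : Ω → ℝ)
    (hp : ∀ x, 0 < p x) (hq : ∀ x, 0 < q x)
    (hps : ∑ x, p x = 1) (hqs : ∑ x, q x = 1) :
    (∀ f : Ω → ℝ, (∀ x, 0 < f x) →
      (∑ x, p x * Real.log (f x)) - (∑ x, q x * f x) + 1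
        ≤ ∑ x, p x * Real.log (p x / q x)) ∧
    ((∑ x, p x * Real.log (p x / q x)) - (∑ x, q x * (p x / q x)) + 1
        = ∑ x, p x * Real.log (p x / q x)) :=
  density_ratio_variational_max_general p q hp hq hps
end

section
/- Let S, A be finite nonempty types, P_tr and P_te transition kernels, π a policy, d0 an initial distribution, and γ a discount factor with 0 ≤ γ < 1. Suppose d_tr : S → A → ℝ satisfies the Bellman flow equation for (P_tr, π, d0, γ) and d_te : S → A → ℝ satisfies the Bellman flow equation for (P_te, π, d0, γ), and that d_tr s a > 0 for all s, a. Let μ : S → A → ℝ satisfy μ s a > 0 for all s, a, and define β s a := d_tr s a / μ s a and w s a := d_te s a / d_tr s a. Then for every q : S → A → ℝ: ∑_{s,a,s'} μ s a * P_te s a s' * w s a * β s a * (q s a − γ * q(s', π)) − (1 − γ) * ∑_{s} d0 s * q(s, π) = 0. -/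
/-!
At the true ratios the weights collapse, `μ * w * β = d_te`, and since `P_te s a` is a
probability vector the loss becomes `∑ d_te (q - γ · P_te q(·, π)) - (1 - γ) ∑ d0 q(·, π)`.
Multiplying the Bellman flow equation of `d_te` by `q` and summing, the `γ`-terms are the same
one-step look-ahead of `q(·, π)` written once from the state reached and once from the state left,
so they cancel and only the initial term `(1 - γ) ∑ d0 q(·, π)` remains.
-/

open Finset

/-- `policyMean π f s` is the paper's `f(s, π)`. -/
def policyMean {S A : Type*} [Fintype A] (π : S → A → ℝ) (f : S → A → ℝ) (s : S) : ℝ :=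
  ∑ a, π s a * f s a

def inflow {S A : Type*} [Fintype S] [Fintype A] (P : S → A → S → ℝ) (d : S → A → ℝ)
    (s : S) : ℝ :=
  ∑ sb, ∑ ab, P sb ab s * d sb ab

def IsBellmanFlow {S A : Type*} [Fintype S] [Fintype A] (P : S → A → S → ℝ)
    (π : S → A → ℝ) (d0 : S → ℝ) (γ : ℝ) (d : S → A → ℝ) : Prop :=
  ∀ s a, d s a = (1 - γ) * d0 s * π s a + γ * π s a * inflow P d s

section

variable {S A : Type*} [Fintype S] [Fintype A]

theorem sum_mul_sum_transition_eq_sum_inflow_mul (P : S → A → S → ℝ) (d : S → A → ℝ)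
    (V : S → ℝ) :
    ∑ s, ∑ a, d s a * ∑ s', P s a s' * V s' = ∑ s', inflow P d s' * V s' := by
  simp only [inflow, mul_sum, sum_mul]
  calc ∑ s, ∑ a, ∑ s', d s a * (P s a s' * V s')
      = ∑ s, ∑ s', ∑ a, d s a * (P s a s' * V s') := sum_congr rfl fun _ _ => sum_comm
    _ = ∑ s', ∑ s, ∑ a, P s a s' * d s a * V s' := by
      rw [sum_comm]
      exact sum_congr rfl fun _ _ => sum_congr rfl fun _ _ => sum_congr rfl fun _ _ => by ring

omit [Fintype A] in
theorem sum_transition_mul_sub (P : S → A → S → ℝ) (hP : ∀ s a, ∑ s', P s a s' = 1)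
    (s : S) (a : A) (x γ : ℝ) (V : S → ℝ) :
    ∑ s', P s a s' * (x - γ * V s') = x - γ * ∑ s', P s a s' * V s' := by
  simp only [mul_sub, sum_sub_distrib, ← sum_mul, hP, one_mul, mul_sum]
  congr 1
  exact sum_congr rfl fun s' _ => by ring

namespace IsBellmanFlow

variable {P : S → A → S → ℝ} {π : S → A → ℝ} {d0 : S → ℝ} {γ : ℝ} {d : S → A → ℝ}

theorem sum_mul_eq (hd : IsBellmanFlow P π d0 γ d) (q : S → A → ℝ) :
    ∑ s, ∑ a, d s a * q s a
      = (1 - γ) * ∑ s, d0 s * policyMean π q s + γ * ∑ s, inflow P d s * policyMean π q s := by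
  simp only [mul_sum, ← sum_add_distrib, policyMean]
  refine sum_congr rfl fun s _ => sum_congr rfl fun a _ => ?_
  rw [hd s a]
  ring

theorem sum_mul_sub_discounted_eq (hd : IsBellmanFlow P π d0 γ d) (q : S → A → ℝ) :
    ∑ s, ∑ a, d s a * (q s a - γ * ∑ s', P s a s' * policyMean π q s')
      = (1 - γ) * ∑ s, d0 s * policyMean π q s := by
  have hlook : ∑ s, ∑ a, d s a * (γ * ∑ s', P s a s' * policyMean π q s')
      = γ * ∑ s', inflow P d s' * policyMean π q s' := by
    rw [← sum_mul_sum_transition_eq_sum_inflow_mul, mul_sum]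
    exact sum_congr rfl fun s _ => by rw [mul_sum]; exact sum_congr rfl fun a _ => by ring
  simp only [mul_sub, sum_sub_distrib]
  rw [hlook, hd.sum_mul_eq]
  ring

end IsBellmanFlow

end

theorem mis_loss_zero_at_true_ratio_general
    {S A : Type*} [Fintype S] [Fintype A]
    (Pte : S → A → S → ℝ) (π : S → A → ℝ) (d0 : S → ℝ) (γ : ℝ)
    (hPte_sum : ∀ s a, ∑ s', Pte s a s' = 1)
    (dtr dte : S → A → ℝ)
    (hdte : ∀ s a, dte s a
      = (1 - γ) * d0 s * π s a + γ * π s a * ∑ sb, ∑ ab, Pte sb ab s * dte sb ab)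
    (hdtr_pos : ∀ s a, 0 < dtr s a)
    (μ : S → A → ℝ) (hμ : ∀ s a, 0 < μ s a)
    (β : S → A → ℝ) (hβ : ∀ s a, β s a = dtr s a / μ s a)
    (w : S → A → ℝ) (hw : ∀ s a, w s a = dte s a / dtr s a)
    (q : S → A → ℝ) :
    (∑ s, ∑ a, ∑ s', μ s a * Pte s a s' * w s a * β s a *
        (q s a - γ * ∑ a', π s' a' * q s' a'))
      - (1 - γ) * ∑ s, d0 s * ∑ a, π s a * q s a = 0 := by
  have hratio : ∀ s a, μ s a * w s a * β s a = dte s a := fun s a => by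
    rw [hβ, hw]
    field_simp [(hμ s a).ne', (hdtr_pos s a).ne']
  have hsummand : ∀ s a, ∑ s', μ s a * Pte s a s' * w s a * β s a *
      (q s a - γ * policyMean π q s')
      = dte s a * (q s a - γ * ∑ s', Pte s a s' * policyMean π q s') := fun s a => by
    rw [← sum_transition_mul_sub Pte hPte_sum, mul_sum, ← hratio]
    exact sum_congr rfl fun s' _ => by ring
  have hflow : IsBellmanFlow Pte π d0 γ dte := hdte
  have hmean : ∀ s, ∑ a, π s a * q s a = policyMean π q s := fun _ => rfl
  simp only [hmean, hsummand, hflow.sum_mul_sub_discounted_eq, sub_self]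

/-- The MIS loss `L_w(w, β, q)` vanishes for every discriminator `q` when
`β = d_tr/μ` and `w = d_te/d_tr` are the exact density ratios, where `d_tr` and
`d_te` are the discounted occupancies (Bellman flow solutions) in the simulator
`P_tr` and the real environment `P_te`. -/
theorem mis_loss_zero_at_true_ratio
    {S A : Type*} [Fintype S] [Fintype A] [Nonempty S] [Nonempty A]
    (Ptr Pte : S → A → S → ℝ) (π : S → A → ℝ) (d0 : S → ℝ) (γ : ℝ)
    (hPtr_nonneg : ∀ s a s', 0 ≤ Ptr s a s')
    (hPtr_sum : ∀ s a, ∑ s', Ptr s a s' = 1)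
    (hPte_nonneg : ∀ s a s', 0 ≤ Pte s a s')
    (hPte_sum : ∀ s a, ∑ s', Pte s a s' = 1)
    (hπ_nonneg : ∀ s a, 0 ≤ π s a) (hπ_sum : ∀ s, ∑ a, π s a = 1)
    (hd0_nonneg : ∀ s, 0 ≤ d0 s) (hd0_sum : ∑ s, d0 s = 1)
    (hγ0 : 0 ≤ γ) (hγ1 : γ < 1)
    (dtr dte : S → A → ℝ)
    (hdtr : ∀ s a, dtr s a
      = (1 - γ) * d0 s * π s a + γ * π s a * ∑ sb, ∑ ab, Ptr sb ab s * dtr sb ab)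
    (hdte : ∀ s a, dte s a
      = (1 - γ) * d0 s * π s a + γ * π s a * ∑ sb, ∑ ab, Pte sb ab s * dte sb ab)
    (hdtr_pos : ∀ s a, 0 < dtr s a)
    (μ : S → A → ℝ) (hμ : ∀ s a, 0 < μ s a)
    (β : S → A → ℝ) (hβ : ∀ s a, β s a = dtr s a / μ s a)
    (w : S → A → ℝ) (hw : ∀ s a, w s a = dte s a / dtr s a)
    (q : S → A → ℝ) :
    (∑ s, ∑ a, ∑ s', μ s a * Pte s a s' * w s a * β s a *
        (q s a - γ * ∑ a', π s' a' * q s' a'))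
      - (1 - γ) * ∑ s, d0 s * ∑ a, π s a * q s a = 0 :=
  mis_loss_zero_at_true_ratio_general Pte π d0 γ hPte_sum dtr dte hdte hdtr_pos μ hμ β hβ w hw q
end

section
/- Let S, A be finite nonempty types, P a transition kernel, π a policy, d0 an initial distribution, and γ a discount factor with 0 ≤ γ < 1. Then there exists a unique function d : S → A → ℝ satisfying the Bellman flow equation for (P, π, d0, γ); moreover this d satisfies d s a ≥ 0 for all s, a and ∑_{s,a} d s a = 1. -/
/-!
Viewing `d` as a vector on `S × A`, the flow equation reads `d = (1 - γ) • μ₀ + γ • (Q *ᵥ d)`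
with `Q (s, a) (s̄, ā) = π s a * P s̄ ā s` column-stochastic, so `Q` preserves the total mass
`∑ᵢ xᵢ`. Hence a nonnegative `f` with `f ≤ γ • (Q *ᵥ f)` has mass at most `γ` times its own and
vanishes. Applied to `|d - d'|` for two solutions this gives uniqueness, and existence follows
because `1 - γ • Q` is then an injective, hence invertible, matrix; applied to the negative part
of a solution it gives nonnegativity. Summing the equation gives `∑ d = (1 - γ) + γ ∑ d`.
-/

open Finset Matrix

namespace Matrix

theorem mulVec_mono_of_nonneg {m n : Type*} [Fintype n] {Q : Matrix m n ℝ}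
    (hQ : ∀ i j, 0 ≤ Q i j) {u v : n → ℝ} (huv : u ≤ v) : Q *ᵥ u ≤ Q *ᵥ v := fun i =>
  sum_le_sum fun j _ => mul_le_mul_of_nonneg_left (huv j) (hQ i j)

theorem abs_mulVec_le_of_nonneg {m n : Type*} [Fintype n] {Q : Matrix m n ℝ}
    (hQ : ∀ i j, 0 ≤ Q i j) (v : n → ℝ) :
    |Q *ᵥ v| ≤ Q *ᵥ |v| := fun i =>
  calc |∑ j, Q i j * v j| ≤ ∑ j, |Q i j * v j| := abs_sum_le_sum_abs _ _
    _ = ∑ j, Q i j * |v j| := by simp_rw [abs_mul, abs_of_nonneg (hQ i _)]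

variable {n : Type*} [Fintype n] [DecidableEq n] {Q : Matrix n n ℝ} {γ : ℝ}

theorem eq_zero_of_nonneg_of_le_smul_mulVec (hQ : Q ∈ colStochastic ℝ n) (hγ1 : γ < 1)
    {f : n → ℝ} (hf0 : 0 ≤ f) (hf : f ≤ γ • (Q *ᵥ f)) : f = 0 := by
  have hsum_le : ∑ i, f i ≤ γ * ∑ i, f i :=
    calc ∑ i, f i ≤ ∑ i, (γ • (Q *ᵥ f)) i := sum_le_sum fun i _ => hf i
      _ = γ * ∑ i, f i := by
        simp only [Pi.smul_apply, smul_eq_mul, ← mul_sum, sum_mulVec_of_mem_colStochastic hQ]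
  have hsum0 : ∑ i, f i = 0 := by nlinarith [sum_nonneg fun i (_ : i ∈ univ) => hf0 i]
  funext i
  exact (sum_eq_zero_iff_of_nonneg fun j _ => hf0 j).mp hsum0 i (mem_univ i)

theorem eq_zero_of_eq_smul_mulVec (hQ : Q ∈ colStochastic ℝ n) (hγ0 : 0 ≤ γ) (hγ1 : γ < 1)
    {e : n → ℝ} (he : e = γ • (Q *ᵥ e)) : e = 0 := by
  have habs : |e| ≤ γ • (Q *ᵥ |e|) :=
    calc |e| = γ • |Q *ᵥ e| := funext fun i => by
          conv_lhs => rw [he]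
          simp only [Pi.abs_apply, Pi.smul_apply, smul_eq_mul, abs_mul, abs_of_nonneg hγ0]
      _ ≤ γ • (Q *ᵥ |e|) := smul_le_smul_of_nonneg_left (abs_mulVec_le_of_nonneg hQ.1 e) hγ0
  exact (Pi.abs_eq_zero e).mp (eq_zero_of_nonneg_of_le_smul_mulVec hQ hγ1 (abs_nonneg e) habs)

theorem mulVec_one_sub_smul (x : n → ℝ) : (1 - γ • Q) *ᵥ x = x - γ • (Q *ᵥ x) := by
  rw [sub_mulVec, one_mulVec, smul_mulVec]

theorem existsUnique_eq_add_smul_mulVec (hQ : Q ∈ colStochastic ℝ n) (hγ0 : 0 ≤ γ)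
    (hγ1 : γ < 1) (b : n → ℝ) : ∃! x, x = b + γ • (Q *ᵥ x) := by
  have hinj : Function.Injective (1 - γ • Q).mulVec := fun u v huv => by
    refine sub_eq_zero.mp (eq_zero_of_eq_smul_mulVec hQ hγ0 hγ1 ?_)
    rw [← sub_eq_zero, ← mulVec_one_sub_smul, mulVec_sub, huv, sub_self]
  have hbij : Function.Bijective (1 - γ • Q).mulVec :=
    ⟨hinj, mulVec_surjective_iff_isUnit.mpr (mulVec_injective_iff_isUnit.mp hinj)⟩
  simpa only [mulVec_one_sub_smul, sub_eq_iff_eq_add] using hbij.existsUnique b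

theorem nonneg_of_eq_add_smul_mulVec (hQ : Q ∈ colStochastic ℝ n) (hγ0 : 0 ≤ γ) (hγ1 : γ < 1)
    {b x : n → ℝ} (hb : 0 ≤ b) (hx : x = b + γ • (Q *ᵥ x)) : 0 ≤ x := by
  have hneg : -x ≤ γ • (Q *ᵥ x⁻) :=
    calc -x ≤ γ • (Q *ᵥ -x) := by
          rw [mulVec_neg, smul_neg]; nth_rw 1 [hx]; simpa using hb
      _ ≤ γ • (Q *ᵥ x⁻) :=
        smul_le_smul_of_nonneg_left (mulVec_mono_of_nonneg hQ.1 (neg_le_negPart x)) hγ0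
  have hpos : 0 ≤ γ • (Q *ᵥ x⁻) :=
    smul_nonneg hγ0 (by simpa using mulVec_mono_of_nonneg hQ.1 (negPart_nonneg x))
  have hle : x⁻ ≤ γ • (Q *ᵥ x⁻) := by rw [negPart_def]; exact sup_le hneg hpos
  exact negPart_eq_zero.mp (eq_zero_of_nonneg_of_le_smul_mulVec hQ hγ1 (negPart_nonneg x) hle)

theorem sum_eq_of_eq_add_smul_mulVec (hQ : Q ∈ colStochastic ℝ n) {b x : n → ℝ}
    (hx : x = b + γ • (Q *ᵥ x)) : (1 - γ) * ∑ i, x i = ∑ i, b i := by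
  have h := congrArg (fun v => ∑ i, v i) hx
  simp only [Pi.add_apply, Pi.smul_apply, smul_eq_mul, sum_add_distrib, ← mul_sum,
    sum_mulVec_of_mem_colStochastic hQ] at h
  linarith

end Matrix

section StateAction

variable {S A : Type*}

def stateActionTransition (π : S → A → ℝ) (P : S → A → S → ℝ) : Matrix (S × A) (S × A) ℝ :=
  fun i j => π i.1 i.2 * P j.1 j.2 i.1

def initialStateAction (d0 : S → ℝ) (π : S → A → ℝ) : S × A → ℝ :=
  fun i => d0 i.1 * π i.1 i.2

theorem initialStateAction_nonneg {d0 : S → ℝ} {π : S → A → ℝ} (hd0_nonneg : ∀ s, 0 ≤ d0 s)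
    (hπ_nonneg : ∀ s a, 0 ≤ π s a) : 0 ≤ initialStateAction d0 π := fun _ =>
  mul_nonneg (hd0_nonneg _) (hπ_nonneg _ _)

variable [Fintype S] [Fintype A]

theorem stateActionTransition_mem_colStochastic [DecidableEq (S × A)]
    {π : S → A → ℝ} {P : S → A → S → ℝ}
    (hP_nonneg : ∀ s a s', 0 ≤ P s a s') (hP_sum : ∀ s a, ∑ s', P s a s' = 1)
    (hπ_nonneg : ∀ s a, 0 ≤ π s a) (hπ_sum : ∀ s, ∑ a, π s a = 1) :
    stateActionTransition π P ∈ colStochastic ℝ (S × A) := by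
  refine mem_colStochastic_iff_sum.mpr ⟨fun i j => mul_nonneg (hπ_nonneg _ _) (hP_nonneg _ _ _),
    fun j => ?_⟩
  simp only [stateActionTransition, Fintype.sum_prod_type, ← sum_mul, hπ_sum, one_mul, hP_sum]

theorem sum_initialStateAction {d0 : S → ℝ} {π : S → A → ℝ} (hπ_sum : ∀ s, ∑ a, π s a = 1)
    (hd0_sum : ∑ s, d0 s = 1) : ∑ i, initialStateAction d0 π i = 1 := by
  simp only [initialStateAction, Fintype.sum_prod_type, ← mul_sum, hπ_sum, mul_one, hd0_sum]

theorem stateActionTransition_mulVec_uncurry (π : S → A → ℝ) (P : S → A → S → ℝ)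
    (d : S → A → ℝ) (s : S) (a : A) :
    (stateActionTransition π P *ᵥ Function.uncurry d) (s, a)
      = π s a * ∑ sb, ∑ ab, P sb ab s * d sb ab := by
  simp only [mulVec, dotProduct, stateActionTransition, Fintype.sum_prod_type,
    Function.uncurry_apply_pair, mul_sum, mul_assoc]

theorem bellman_flow_iff (P : S → A → S → ℝ) (π : S → A → ℝ) (d0 : S → ℝ) (γ : ℝ)
    (d : S → A → ℝ) :
    (∀ s a, d s a
        = (1 - γ) * d0 s * π s a + γ * π s a * ∑ sb, ∑ ab, P sb ab s * d sb ab) ↔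
      Function.uncurry d = (1 - γ) • initialStateAction d0 π
        + γ • (stateActionTransition π P *ᵥ Function.uncurry d) := by
  simp only [funext_iff, Prod.forall, Pi.add_apply, Pi.smul_apply, smul_eq_mul,
    Function.uncurry_apply_pair, stateActionTransition_mulVec_uncurry, initialStateAction,
    mul_assoc]

end StateAction

theorem bellman_flow_existsUnique_general
    {S A : Type*} [Fintype S] [Fintype A]
    (P : S → A → S → ℝ) (π : S → A → ℝ) (d0 : S → ℝ) (γ : ℝ)
    (hP_nonneg : ∀ s a s', 0 ≤ P s a s')
    (hP_sum : ∀ s a, ∑ s', P s a s' = 1)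
    (hπ_nonneg : ∀ s a, 0 ≤ π s a) (hπ_sum : ∀ s, ∑ a, π s a = 1)
    (hd0_nonneg : ∀ s, 0 ≤ d0 s) (hd0_sum : ∑ s, d0 s = 1)
    (hγ0 : 0 ≤ γ) (hγ1 : γ < 1) :
    (∃! d : S → A → ℝ, ∀ s a, d s a
        = (1 - γ) * d0 s * π s a + γ * π s a * ∑ sb, ∑ ab, P sb ab s * d sb ab) ∧
    (∀ d : S → A → ℝ,
      (∀ s a, d s a
        = (1 - γ) * d0 s * π s a + γ * π s a * ∑ sb, ∑ ab, P sb ab s * d sb ab) →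
      (∀ s a, 0 ≤ d s a) ∧ (∑ s, ∑ a, d s a = 1)) := by
  classical
  have hQ := stateActionTransition_mem_colStochastic hP_nonneg hP_sum hπ_nonneg hπ_sum
  have hγ : 0 < 1 - γ := sub_pos.mpr hγ1
  simp only [bellman_flow_iff]
  refine ⟨?_, fun d hd => ⟨fun s a => ?_, ?_⟩⟩
  · refine (Equiv.curry S A ℝ).symm.existsUnique_congr_left.mpr ?_
    simpa only [Equiv.symm_symm, Equiv.curry_apply, Function.uncurry_curry]
      using existsUnique_eq_add_smul_mulVec hQ hγ0 hγ1 _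
  · exact nonneg_of_eq_add_smul_mulVec hQ hγ0 hγ1
      (smul_nonneg hγ.le (initialStateAction_nonneg hd0_nonneg hπ_nonneg)) hd (s, a)
  · have hsum := sum_eq_of_eq_add_smul_mulVec hQ hd
    simp only [Pi.smul_apply, smul_eq_mul, ← mul_sum, sum_initialStateAction hπ_sum hd0_sum,
      Fintype.sum_prod_type, Function.uncurry_apply_pair] at hsum
    exact mul_left_cancel₀ hγ.ne' hsum

/-- Existence and uniqueness of the normalized discounted state-action occupancy:
the Bellman flow equation has a unique solution `d`, which is nonnegative and
sums to one. -/
theorem bellman_flow_existsUnique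
    {S A : Type*} [Fintype S] [Fintype A] [Nonempty S] [Nonempty A]
    (P : S → A → S → ℝ) (π : S → A → ℝ) (d0 : S → ℝ) (γ : ℝ)
    (hP_nonneg : ∀ s a s', 0 ≤ P s a s')
    (hP_sum : ∀ s a, ∑ s', P s a s' = 1)
    (hπ_nonneg : ∀ s a, 0 ≤ π s a) (hπ_sum : ∀ s, ∑ a, π s a = 1)
    (hd0_nonneg : ∀ s, 0 ≤ d0 s) (hd0_sum : ∑ s, d0 s = 1)
    (hγ0 : 0 ≤ γ) (hγ1 : γ < 1) :
    (∃! d : S → A → ℝ, ∀ s a, d s a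
        = (1 - γ) * d0 s * π s a + γ * π s a * ∑ sb, ∑ ab, P sb ab s * d sb ab) ∧
    (∀ d : S → A → ℝ,
      (∀ s a, d s a
        = (1 - γ) * d0 s * π s a + γ * π s a * ∑ sb, ∑ ab, P sb ab s * d sb ab) →
      (∀ s a, 0 ≤ d s a) ∧ (∑ s, ∑ a, d s a = 1)) :=
  bellman_flow_existsUnique_general P π d0 γ hP_nonneg hP_sum hπ_nonneg hπ_sum hd0_nonneg hd0_sum
    hγ0 hγ1
end

section
/- Let S, A be finite nonempty types, P_tr and P_te transition kernels, π a policy, d0 an initial distribution, and γ a discount factor with 0 ≤ γ < 1. Suppose d_tr : S → A → ℝ satisfies the Bellman flow equation for (P_tr, π, d0, γ). Let r : S → A → ℝ and let Q : S → A → ℝ satisfy the Bellman equation for (P_te, π, r, γ), and set J := (1 − γ) * ∑_{s} d0 s * Q(s, π). Suppose there is a finite index set I, coefficients λ : I → ℝ with λ i ≥ 0 and ∑_i λ i = 1, and functions q_i : S → A → ℝ for i ∈ I, such that Q s a = ∑_i λ i * q_i s a for all s, a. Then for every w : S → A → ℝ there exists i ∈ I with |∑_{s,a} d_tr s a * w s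 a * r s a − J| ≤ |∑_{s,a,s'} d_tr s a * P_te s a s' * w s a * (q_i s a − γ * q_i(s', π)) − (1 − γ) * ∑_{s} d0 s * q_i(s, π)|. -/
/-!
Since `∑ s', P_te s a s' = 1`, the Bellman equation says that for every `(s, a)` the
`P_te`-expectation of the temporal-difference residual `Q s a - γ Q(s', π)` is `r s a`. Hence the
evaluation error `∑ d_tr w r - J` is exactly the discriminator loss at `q = Q`. The loss is
linear in `q`, so at `Q = ∑ λ_i q_i` it is the convex combination of the losses at the `q_i`, and the
absolute value of a convex combination is bounded by one of its terms.
-/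

open Finset

theorem exists_abs_sum_mul_le_abs {I : Type*} [Fintype I] {lam : I → ℝ}
    (hlam_nonneg : ∀ i, 0 ≤ lam i) (hlam_sum : ∑ i, lam i = 1) (L : I → ℝ) :
    ∃ i, |∑ j, lam j * L j| ≤ |L i| := by
  obtain ⟨i, -, hi⟩ := (convexOn_norm convex_univ).exists_ge_of_centerMass (p := L)
    (fun i _ => hlam_nonneg i) (hlam_sum ▸ one_pos) (fun i _ => Set.mem_univ (L i))
  exact ⟨i, by simpa [univ.centerMass_eq_of_sum_1 _ hlam_sum] using hi⟩

section

variable {S A : Type*} [Fintype A]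

/-- `policyAvg π f s` is the paper's `f(s, π)`. -/
def policyAvg (π f : S → A → ℝ) (s : S) : ℝ := ∑ a, π s a * f s a

theorem policyAvg_add (π f g : S → A → ℝ) (s : S) :
    policyAvg π (f + g) s = policyAvg π f s + policyAvg π g s := by
  simp only [policyAvg, Pi.add_apply, mul_add, sum_add_distrib]

theorem policyAvg_smul (π f : S → A → ℝ) (c : ℝ) (s : S) :
    policyAvg π (c • f) s = c * policyAvg π f s := by
  simp only [policyAvg, Pi.smul_apply, smul_eq_mul, mul_sum, mul_left_comm]

theorem sum_kernel_mul_sub_eq_reward {P : S → A → S → ℝ} [Fintype S]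
    (hP_sum : ∀ s a, ∑ s', P s a s' = 1) {π r Q : S → A → ℝ} {γ : ℝ}
    (hQ : ∀ s a, Q s a = r s a + γ * ∑ s', P s a s' * policyAvg π Q s') (s : S) (a : A) :
    ∑ s', P s a s' * (Q s a - γ * policyAvg π Q s') = r s a := by
  have hmean : ∑ s', P s a s' * Q s a = Q s a := by rw [← sum_mul, hP_sum, one_mul]
  simp only [mul_sub, sum_sub_distrib, hmean, mul_left_comm _ γ, ← mul_sum]
  linarith [hQ s a]

variable [Fintype S]

def discriminatorLoss (P : S → A → S → ℝ) (π : S → A → ℝ) (d0 : S → ℝ) (γ : ℝ)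
    (d w : S → A → ℝ) : (S → A → ℝ) →ₗ[ℝ] ℝ where
  toFun q := (∑ s, ∑ a, ∑ s', d s a * P s a s' * w s a * (q s a - γ * policyAvg π q s'))
    - (1 - γ) * ∑ s, d0 s * policyAvg π q s
  map_add' q q' := by
    simp only [policyAvg_add, Pi.add_apply, mul_add, mul_sub, sum_add_distrib, sum_sub_distrib]
    ring
  map_smul' c q := by
    simp only [policyAvg_smul, Pi.smul_apply, smul_eq_mul, RingHom.id_apply, mul_sub, mul_sum,
      sum_sub_distrib, mul_left_comm c]

theorem sum_mul_reward_sub_return_eq_discriminatorLoss {P : S → A → S → ℝ}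
    (hP_sum : ∀ s a, ∑ s', P s a s' = 1) {π r Q : S → A → ℝ} {γ : ℝ}
    (hQ : ∀ s a, Q s a = r s a + γ * ∑ s', P s a s' * policyAvg π Q s') (d0 : S → ℝ)
    (d w : S → A → ℝ) :
    (∑ s, ∑ a, d s a * w s a * r s a) - (1 - γ) * ∑ s, d0 s * policyAvg π Q s
      = discriminatorLoss P π d0 γ d w Q := by
  have hsa (s : S) (a : A) : ∑ s', d s a * P s a s' * w s a * (Q s a - γ * policyAvg π Q s')
      = d s a * w s a * r s a := by
    rw [← sum_kernel_mul_sub_eq_reward hP_sum hQ s a, mul_sum]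
    exact sum_congr rfl fun s' _ => by ring
  simp only [discriminatorLoss, LinearMap.coe_mk, AddHom.coe_mk, hsa]

end

theorem ope_error_le_sup_discriminator_general
    {S A : Type*} [Fintype S] [Fintype A]
    (Pte : S → A → S → ℝ) (π : S → A → ℝ) (d0 : S → ℝ) (γ : ℝ)
    (hPte_sum : ∀ s a, ∑ s', Pte s a s' = 1)
    (dtr : S → A → ℝ)
    (r : S → A → ℝ) (Q : S → A → ℝ)
    (hQ : ∀ s a, Q s a = r s a + γ * ∑ s', Pte s a s' * ∑ a', π s' a' * Q s' a')
    (J : ℝ) (hJ : J = (1 - γ) * ∑ s, d0 s * ∑ a, π s a * Q s a)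
    {I : Type*} [Fintype I]
    (lam : I → ℝ) (hlam_nonneg : ∀ i, 0 ≤ lam i) (hlam_sum : ∑ i, lam i = 1)
    (qi : I → S → A → ℝ)
    (hconv : ∀ s a, Q s a = ∑ i, lam i * qi i s a) :
    ∀ w : S → A → ℝ, ∃ i : I,
      |(∑ s, ∑ a, dtr s a * w s a * r s a) - J|
        ≤ |(∑ s, ∑ a, ∑ s', dtr s a * Pte s a s' * w s a *
              (qi i s a - γ * ∑ a', π s' a' * qi i s' a'))
            - (1 - γ) * ∑ s, d0 s * ∑ a, π s a * qi i s a| := by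
  intro w
  have hQ_comb : Q = ∑ i, lam i • qi i := by
    ext s a
    simp only [hconv, Finset.sum_apply, Pi.smul_apply, smul_eq_mul]
  have herr : (∑ s, ∑ a, dtr s a * w s a * r s a) - J
      = ∑ i, lam i * discriminatorLoss Pte π d0 γ dtr w (qi i) :=
    calc _ = discriminatorLoss Pte π d0 γ dtr w Q :=
          hJ ▸ sum_mul_reward_sub_return_eq_discriminatorLoss hPte_sum hQ d0 dtr w
      _ = _ := by rw [hQ_comb, map_sum]; simp only [map_smul, smul_eq_mul]
  rw [herr]
  exact exists_abs_sum_mul_le_abs hlam_nonneg hlam_sum _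

/-- Upper bound on the off-environment evaluation error via the discriminator
class: if the true Q-function lies in the convex hull of `{q_i}`, then for any
weight `w` the evaluation error is bounded by the loss at some `q_i`. -/
theorem ope_error_le_sup_discriminator
    {S A : Type*} [Fintype S] [Fintype A] [Nonempty S] [Nonempty A]
    (Ptr Pte : S → A → S → ℝ) (π : S → A → ℝ) (d0 : S → ℝ) (γ : ℝ)
    (hPtr_nonneg : ∀ s a s', 0 ≤ Ptr s a s')
    (hPtr_sum : ∀ s a, ∑ s', Ptr s a s' = 1)
    (hPte_nonneg : ∀ s a s', 0 ≤ Pte s a s')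
    (hPte_sum : ∀ s a, ∑ s', Pte s a s' = 1)
    (hπ_nonneg : ∀ s a, 0 ≤ π s a) (hπ_sum : ∀ s, ∑ a, π s a = 1)
    (hd0_nonneg : ∀ s, 0 ≤ d0 s) (hd0_sum : ∑ s, d0 s = 1)
    (hγ0 : 0 ≤ γ) (hγ1 : γ < 1)
    (dtr : S → A → ℝ)
    (hdtr : ∀ s a, dtr s a
      = (1 - γ) * d0 s * π s a + γ * π s a * ∑ sb, ∑ ab, Ptr sb ab s * dtr sb ab)
    (r : S → A → ℝ) (Q : S → A → ℝ)
    (hQ : ∀ s a, Q s a = r s a + γ * ∑ s', Pte s a s' * ∑ a', π s' a' * Q s' a')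
    (J : ℝ) (hJ : J = (1 - γ) * ∑ s, d0 s * ∑ a, π s a * Q s a)
    {I : Type*} [Fintype I]
    (lam : I → ℝ) (hlam_nonneg : ∀ i, 0 ≤ lam i) (hlam_sum : ∑ i, lam i = 1)
    (qi : I → S → A → ℝ)
    (hconv : ∀ s a, Q s a = ∑ i, lam i * qi i s a) :
    ∀ w : S → A → ℝ, ∃ i : I,
      |(∑ s, ∑ a, dtr s a * w s a * r s a) - J|
        ≤ |(∑ s, ∑ a, ∑ s', dtr s a * Pte s a s' * w s a *
              (qi i s a - γ * ∑ a', π s' a' * qi i s' a'))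
            - (1 - γ) * ∑ s, d0 s * ∑ a, π s a * qi i s a| :=
  ope_error_le_sup_discriminator_general Pte π d0 γ hPte_sum dtr r Q hQ J hJ lam hlam_nonneg
    hlam_sum qi hconv
end

section
/- Let S, A be finite nonempty types, P_tr and P_te transition kernels, π a policy, d0 an initial distribution, and γ a discount factor with 0 ≤ γ < 1. Suppose d_tr : S → A → ℝ satisfies the Bellman flow equation for (P_tr, π, d0, γ). Let μ : S → A → ℝ satisfy μ s a > 0 for all s, a and define β s a := d_tr s a / μ s a. Let r : S → A → ℝ and let Q : S → A → ℝ satisfy the Bellman equation for (P_te, π, r, γ). Then for every w : S → A → ℝ: ∑_{s,a,s'} μ s a * P_te s a s' * w s a * β s a * (Q s a − γ * Q(s', π)) − ∑_{s,a} d_tr s a * w s a * r s a = 0. -/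
/-! The identity holds term by term in `(s, a)`: `μ * β = d_tr`, and by the Bellman equation
the `P_te(s, a, ·)`-average of the residual `Q(s, a) - γ Q(s', π)` is the reward `r(s, a)`. -/

open Finset

theorem sum_mul_sub_const_mul {ι : Type*} [Fintype ι] {p : ι → ℝ} (hp : ∑ i, p i = 1)
    (q c : ℝ) (v : ι → ℝ) : ∑ i, p i * (q - c * v i) = q - c * ∑ i, p i * v i := by
  simp only [mul_sub, sum_sub_distrib, ← sum_mul, hp, one_mul, mul_sum]
  exact congrArg _ (sum_congr rfl fun _ _ => by ring)

theorem sum_mul_bellman_residual_eq {ι : Type*} [Fintype ι] {p : ι → ℝ} (hp : ∑ i, p i = 1)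
    {q r γ : ℝ} {v : ι → ℝ} (hq : q = r + γ * ∑ i, p i * v i) :
    ∑ i, p i * (q - γ * v i) = r := by
  rw [sum_mul_sub_const_mul hp, hq]
  ring

theorem q_loss_zero_at_true_q_general
    {S A : Type*} [Fintype S] [Fintype A]
    (Pte : S → A → S → ℝ) (π : S → A → ℝ) (γ : ℝ)
    (hPte_sum : ∀ s a, ∑ s', Pte s a s' = 1)
    (dtr : S → A → ℝ)
    (μ : S → A → ℝ) (hμ : ∀ s a, 0 < μ s a)
    (β : S → A → ℝ) (hβ : ∀ s a, β s a = dtr s a / μ s a)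
    (r : S → A → ℝ) (Q : S → A → ℝ)
    (hQ : ∀ s a, Q s a = r s a + γ * ∑ s', Pte s a s' * ∑ a', π s' a' * Q s' a') :
    ∀ w : S → A → ℝ,
      (∑ s, ∑ a, ∑ s', μ s a * Pte s a s' * w s a * β s a *
          (Q s a - γ * ∑ a', π s' a' * Q s' a'))
        - (∑ s, ∑ a, dtr s a * w s a * r s a) = 0 := by
  intro w
  rw [sub_eq_zero]
  refine sum_congr rfl fun s _ => sum_congr rfl fun a _ => ?_
  have hμβ : μ s a * β s a = dtr s a := by rw [hβ, mul_div_cancel₀ _ (hμ s a).ne']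
  calc ∑ s', μ s a * Pte s a s' * w s a * β s a * (Q s a - γ * ∑ a', π s' a' * Q s' a')
      = μ s a * β s a * w s a * ∑ s', Pte s a s' * (Q s a - γ * ∑ a', π s' a' * Q s' a') := by
        rw [mul_sum]
        exact sum_congr rfl fun _ _ => by ring
    _ = dtr s a * w s a * r s a := by
        rw [hμβ, sum_mul_bellman_residual_eq (hPte_sum s a) (hQ s a)]

/-- The Q-estimation loss `L_q(w, β, Q)` vanishes for every weight function `w`
when `Q` is the true Q-function of `π` in `P_te` and `β = d_tr/μ` is the exact
ratio of the simulator occupancy to the data distribution. -/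
theorem q_loss_zero_at_true_q
    {S A : Type*} [Fintype S] [Fintype A] [Nonempty S] [Nonempty A]
    (Ptr Pte : S → A → S → ℝ) (π : S → A → ℝ) (d0 : S → ℝ) (γ : ℝ)
    (hPtr_nonneg : ∀ s a s', 0 ≤ Ptr s a s')
    (hPtr_sum : ∀ s a, ∑ s', Ptr s a s' = 1)
    (hPte_nonneg : ∀ s a s', 0 ≤ Pte s a s')
    (hPte_sum : ∀ s a, ∑ s', Pte s a s' = 1)
    (hπ_nonneg : ∀ s a, 0 ≤ π s a) (hπ_sum : ∀ s, ∑ a, π s a = 1)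
    (hd0_nonneg : ∀ s, 0 ≤ d0 s) (hd0_sum : ∑ s, d0 s = 1)
    (hγ0 : 0 ≤ γ) (hγ1 : γ < 1)
    (dtr : S → A → ℝ)
    (hdtr : ∀ s a, dtr s a
      = (1 - γ) * d0 s * π s a + γ * π s a * ∑ sb, ∑ ab, Ptr sb ab s * dtr sb ab)
    (μ : S → A → ℝ) (hμ : ∀ s a, 0 < μ s a)
    (β : S → A → ℝ) (hβ : ∀ s a, β s a = dtr s a / μ s a)
    (r : S → A → ℝ) (Q : S → A → ℝ)
    (hQ : ∀ s a, Q s a = r s a + γ * ∑ s', Pte s a s' * ∑ a', π s' a' * Q s' a') :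
    ∀ w : S → A → ℝ,
      (∑ s, ∑ a, ∑ s', μ s a * Pte s a s' * w s a * β s a *
          (Q s a - γ * ∑ a', π s' a' * Q s' a'))
        - (∑ s, ∑ a, dtr s a * w s a * r s a) = 0 :=
  q_loss_zero_at_true_q_general Pte π γ hPte_sum dtr μ hμ β hβ r Q hQ
end

section
/- Let S, A be finite nonempty types, P_te a transition kernel, π a policy, d0 an initial distribution, and γ a discount factor with 0 ≤ γ < 1. Let μ, β̂ : S → A → ℝ, let d be a positive integer, and let Φ, Ψ : S → A → (Fin d → ℝ) be feature maps; write Ψ(s', π) := ∑_{a'} π s' a' • Ψ s' a'. Define the d × d real matrix M := ∑_{s,a,s'} μ s a * P_te s a s' * β̂ s a • vecMulVec (Ψ s a − γ • Ψ(s', π)) (Φ s a) and the vector b := (1 − γ) • ∑_{s} d0 s • Ψ(s, π). If M is invertible, set α̂ := M⁻¹.mulVec b. Then for every ζ : Fin d → ℝ, with w s a := ∑_j Φ s a j * α̂ j and q s a := ∑_j Ψ s a j * ζ j, it holds that ∑_{s,a,s'} μ s a * P_te s a s' * w s a * β̂ s a * (q s a − γ * q(s', π)) − (1 − γ) * ∑_{s}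 d0 s * q(s, π) = 0. -/
/-! With `w = Φ α` and `q = Ψ ζ` the MIS loss is the bilinear form `(M α) ⬝ᵥ ζ - b ⬝ᵥ ζ`:
each summand of `M` is the rank-one matrix that produces the corresponding summand of the loss.
Hence the loss vanishes for every `ζ` exactly when `M α = b`, which `α̂ = M⁻¹ b` satisfies. -/

open Matrix

section
variable {n R : Type*} [Fintype n] [CommRing R]

theorem vecMulVec_mulVec_dotProduct (u v x y : n → R) :
    (vecMulVec u v *ᵥ x) ⬝ᵥ y = (v ⬝ᵥ x) * (u ⬝ᵥ y) := by
  rw [vecMulVec_mulVec, op_smul_eq_smul, smul_dotProduct, smul_eq_mul]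

theorem mulVec_nonsing_inv_mulVec [DecidableEq n] {M : Matrix n n R} (hM : IsUnit M)
    (b : n → R) : M *ᵥ (M⁻¹ *ᵥ b) = b := by
  rw [mulVec_mulVec, mul_nonsing_inv M ((isUnit_iff_isUnit_det M).mp hM), one_mulVec]

variable {S A : Type*} [Fintype S] [Fintype A]

theorem sum_weighted_bellman_residual_eq_mulVec_dotProduct (μ βhat π : S → A → R)
    (P : S → A → S → R) (γ : R) (Φ Ψ : S → A → n → R) (α ζ : n → R) :
    ∑ s, ∑ a, ∑ s', μ s a * P s a s' * (Φ s a ⬝ᵥ α) * βhat s a *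
        (Ψ s a ⬝ᵥ ζ - γ * ∑ a', π s' a' * (Ψ s' a' ⬝ᵥ ζ)) =
      ((∑ s, ∑ a, ∑ s', (μ s a * P s a s' * βhat s a) •
        vecMulVec (Ψ s a - γ • ∑ a', π s' a' • Ψ s' a') (Φ s a)) *ᵥ α) ⬝ᵥ ζ := by
  simp only [sum_mulVec, sum_dotProduct, smul_mulVec, smul_dotProduct,
    vecMulVec_mulVec_dotProduct, sub_dotProduct, smul_eq_mul]
  refine Finset.sum_congr rfl fun s _ => Finset.sum_congr rfl fun a _ =>
    Finset.sum_congr rfl fun s' _ => ?_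
  ring

theorem sum_initial_value_eq_dotProduct (d0 : S → R) (π : S → A → R) (γ : R)
    (Ψ : S → A → n → R) (ζ : n → R) :
    (1 - γ) * ∑ s, d0 s * ∑ a, π s a * (Ψ s a ⬝ᵥ ζ) =
      ((1 - γ) • ∑ s, d0 s • ∑ a, π s a • Ψ s a) ⬝ᵥ ζ := by
  simp only [smul_dotProduct, sum_dotProduct, smul_eq_mul]

end

theorem linear_mis_closed_form_general
    {S A : Type*} [Fintype S] [Fintype A]
    (Pte : S → A → S → ℝ) (π : S → A → ℝ) (d0 : S → ℝ) (γ : ℝ)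
    (μ βhat : S → A → ℝ)
    (d : ℕ)
    (Φ Ψ : S → A → (Fin d → ℝ))
    (M : Matrix (Fin d) (Fin d) ℝ)
    (hM : M = ∑ s, ∑ a, ∑ s', (μ s a * Pte s a s' * βhat s a) •
      Matrix.vecMulVec (Ψ s a - γ • ∑ a', π s' a' • Ψ s' a') (Φ s a))
    (b : Fin d → ℝ)
    (hb : b = (1 - γ) • ∑ s, d0 s • ∑ a, π s a • Ψ s a)
    (hMunit : IsUnit M)
    (αhat : Fin d → ℝ) (hα : αhat = M⁻¹.mulVec b) :
    ∀ ζ : Fin d → ℝ,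
      (∑ s, ∑ a, ∑ s', μ s a * Pte s a s' * (∑ j, Φ s a j * αhat j) * βhat s a *
          ((∑ j, Ψ s a j * ζ j) - γ * ∑ a', π s' a' * ∑ j, Ψ s' a' j * ζ j))
        - (1 - γ) * ∑ s, d0 s * ∑ a, π s a * ∑ j, Ψ s a j * ζ j = 0 := by
  intro ζ
  have hMα : M *ᵥ αhat = b := hα ▸ mulVec_nonsing_inv_mulVec hMunit b
  calc _ = (M *ᵥ αhat) ⬝ᵥ ζ - b ⬝ᵥ ζ := by
        rw [hM, hb]
        -- `∑ j, u j * v j` is `u ⬝ᵥ v` by definition, so the lemmas apply up to unfolding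
        exact congrArg₂ _
          (sum_weighted_bellman_residual_eq_mulVec_dotProduct μ βhat π Pte γ Φ Ψ αhat ζ)
          (sum_initial_value_eq_dotProduct d0 π γ Ψ ζ)
    _ = 0 := by rw [hMα, sub_self]

/-- Closed-form solution of the MIS weight estimator under linear
parameterization: with `w = Φᵀ α̂` where `α̂ = M⁻¹ b`, the MIS loss
`L_w(w, β̂, q)` vanishes for every linear discriminator `q = Ψᵀ ζ`. -/
theorem linear_mis_closed_form
    {S A : Type*} [Fintype S] [Fintype A] [Nonempty S] [Nonempty A]
    (Pte : S → A → S → ℝ) (π : S → A → ℝ) (d0 : S → ℝ) (γ : ℝ)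
    (hPte_nonneg : ∀ s a s', 0 ≤ Pte s a s')
    (hPte_sum : ∀ s a, ∑ s', Pte s a s' = 1)
    (hπ_nonneg : ∀ s a, 0 ≤ π s a) (hπ_sum : ∀ s, ∑ a, π s a = 1)
    (hd0_nonneg : ∀ s, 0 ≤ d0 s) (hd0_sum : ∑ s, d0 s = 1)
    (hγ0 : 0 ≤ γ) (hγ1 : γ < 1)
    (μ βhat : S → A → ℝ)
    (d : ℕ) (hd : 0 < d)
    (Φ Ψ : S → A → (Fin d → ℝ))
    (M : Matrix (Fin d) (Fin d) ℝ)
    (hM : M = ∑ s, ∑ a, ∑ s', (μ s a * Pte s a s' * βhat s a) •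
      Matrix.vecMulVec (Ψ s a - γ • ∑ a', π s' a' • Ψ s' a') (Φ s a))
    (b : Fin d → ℝ)
    (hb : b = (1 - γ) • ∑ s, d0 s • ∑ a, π s a • Ψ s a)
    (hMunit : IsUnit M)
    (αhat : Fin d → ℝ) (hα : αhat = M⁻¹.mulVec b) :
    ∀ ζ : Fin d → ℝ,
      (∑ s, ∑ a, ∑ s', μ s a * Pte s a s' * (∑ j, Φ s a j * αhat j) * βhat s a *
          ((∑ j, Ψ s a j * ζ j) - γ * ∑ a', π s' a' * ∑ j, Ψ s' a' j * ζ j))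
        - (1 - γ) * ∑ s, d0 s * ∑ a, π s a * ∑ j, Ψ s a j * ζ j = 0 :=
  linear_mis_closed_form_general Pte π d0 γ μ βhat d Φ Ψ M hM b hb hMunit αhat hα
end

section
/- Let S, A be finite nonempty types, P_te a transition kernel, π a policy, d0 an initial distribution, and γ a discount factor with 0 ≤ γ < 1. Let H be a real inner product space and φ : S → A → H a feature map. Let μ, w, β : S → A → ℝ and define q* ∈ H by q* := ∑_{s,a,s'} (μ s a * P_te s a s' * w s a * β s a) • (φ s a − γ • ∑_{a'} π s' a' • φ s' a') − (1 − γ) • ∑_{s} d0 s • ∑_{a} π s a • φ s a. For h ∈ H define q_h : S → A → ℝ by q_h s a := ⟪h, φ s a⟫, and the loss L(h) := ∑_{s,a,s'} μ s a * P_te s a s' * w s a * β s a * (q_h s a − γ * q_h(s', π)) − (1 − γ) * ∑_{s} d0 s * q_h(s, π), where q_h(s', π) := ∑_{a'} π s' a' * q_h s' a'. Then ‖q*‖² is the greatest value of L(h)² over all h ∈ H with ‖h‖ ≤ 1: L(h)² ≤ ‖q*‖² for every such h, and this value is attained. -/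
open scoped RealInnerProductSpace

/-!
Since `q_h = ⟪h, φ · ·⟫` is linear in `h`, the loss is the linear functional
`L h = ⟪h, q*⟫`, so its square over the unit ball is at most `‖q*‖²` by Cauchy–Schwarz,
with equality at `h = q* / ‖q*‖`.
-/

section UnitBall

variable {H : Type*} [NormedAddCommGroup H] [InnerProductSpace ℝ H]

theorem sq_inner_le_sq_norm_of_norm_le_one {h : H} (hh : ‖h‖ ≤ 1) (q : H) :
    ⟪h, q⟫ ^ 2 ≤ ‖q‖ ^ 2 := by
  have : |⟪h, q⟫| ≤ ‖q‖ :=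
    calc |⟪h, q⟫| ≤ ‖h‖ * ‖q‖ := abs_real_inner_le_norm h q
      _ ≤ ‖q‖ := mul_le_of_le_one_left (norm_nonneg q) hh
  simpa only [sq_abs] using pow_le_pow_left₀ (abs_nonneg _) this 2

-- For `q = 0` the junk value `‖0‖⁻¹ = 0` makes `‖q‖⁻¹ • q = 0` a witness as well.
theorem exists_norm_le_one_sq_inner_eq_sq_norm (q : H) :
    ∃ h : H, ‖h‖ ≤ 1 ∧ ⟪h, q⟫ ^ 2 = ‖q‖ ^ 2 := by
  refine ⟨‖q‖⁻¹ • q, ?_, ?_⟩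
  · rw [norm_smul, norm_inv, norm_norm]
    exact inv_mul_le_one_of_le₀ le_rfl (norm_nonneg q)
  · rw [real_inner_smul_left, real_inner_self_eq_norm_sq]
    rcases eq_or_ne ‖q‖ 0 with hq | hq
    · simp [hq]
    · field_simp

end UnitBall

theorem mis_loss_eq_inner {S A : Type*} [Fintype S] [Fintype A]
    (Pte : S → A → S → ℝ) (π : S → A → ℝ) (d0 : S → ℝ) (γ : ℝ)
    {H : Type*} [NormedAddCommGroup H] [InnerProductSpace ℝ H]
    (φ : S → A → H) (μ w β : S → A → ℝ) (h : H) :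
    (∑ s, ∑ a, ∑ s', μ s a * Pte s a s' * w s a * β s a *
        (⟪h, φ s a⟫ - γ * ∑ a', π s' a' * ⟪h, φ s' a'⟫))
      - (1 - γ) * ∑ s, d0 s * ∑ a, π s a * ⟪h, φ s a⟫ =
    ⟪h, (∑ s, ∑ a, ∑ s', (μ s a * Pte s a s' * w s a * β s a) •
        (φ s a - γ • ∑ a', π s' a' • φ s' a'))
      - (1 - γ) • ∑ s, d0 s • ∑ a, π s a • φ s a⟫ := by
  simp only [inner_sub_right, inner_sum, real_inner_smul_right]

theorem rkhs_mis_loss_sup_general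
    {S A : Type*} [Fintype S] [Fintype A]
    (Pte : S → A → S → ℝ) (π : S → A → ℝ) (d0 : S → ℝ) (γ : ℝ)
    {H : Type*} [NormedAddCommGroup H] [InnerProductSpace ℝ H]
    (φ : S → A → H)
    (μ w β : S → A → ℝ)
    (qstar : H)
    (hqstar : qstar =
      (∑ s, ∑ a, ∑ s', (μ s a * Pte s a s' * w s a * β s a) •
        (φ s a - γ • ∑ a', π s' a' • φ s' a'))
      - (1 - γ) • ∑ s, d0 s • ∑ a, π s a • φ s a)
    (L : H → ℝ)
    (hL : ∀ h : H, L h =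
      (∑ s, ∑ a, ∑ s', μ s a * Pte s a s' * w s a * β s a *
        ((⟪h, φ s a⟫ : ℝ) - γ * ∑ a', π s' a' * (⟪h, φ s' a'⟫ : ℝ)))
      - (1 - γ) * ∑ s, d0 s * ∑ a, π s a * (⟪h, φ s a⟫ : ℝ)) :
    (∀ h : H, ‖h‖ ≤ 1 → (L h) ^ 2 ≤ ‖qstar‖ ^ 2) ∧
    (∃ h : H, ‖h‖ ≤ 1 ∧ (L h) ^ 2 = ‖qstar‖ ^ 2) := by
  have hL_inner : ∀ h, L h = ⟪h, qstar⟫ := fun h => by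
    rw [hL, hqstar, mis_loss_eq_inner]
  simp only [hL_inner]
  exact ⟨fun h hh => sq_inner_le_sq_norm_of_norm_le_one hh qstar,
    exists_norm_le_one_sq_inner_eq_sq_norm qstar⟩

/-- RKHS closed form for the inner maximization of the MIS loss: over the unit
ball `{q_h : ‖h‖ ≤ 1}` of the RKHS with feature map `φ`, the squared MIS loss
`L_w(w, β, q_h)²` is maximized with maximal value `‖q*‖²`. -/
theorem rkhs_mis_loss_sup
    {S A : Type*} [Fintype S] [Fintype A] [Nonempty S] [Nonempty A]
    (Pte : S → A → S → ℝ) (π : S → A → ℝ) (d0 : S → ℝ) (γ : ℝ)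
    (hPte_nonneg : ∀ s a s', 0 ≤ Pte s a s')
    (hPte_sum : ∀ s a, ∑ s', Pte s a s' = 1)
    (hπ_nonneg : ∀ s a, 0 ≤ π s a) (hπ_sum : ∀ s, ∑ a, π s a = 1)
    (hd0_nonneg : ∀ s, 0 ≤ d0 s) (hd0_sum : ∑ s, d0 s = 1)
    (hγ0 : 0 ≤ γ) (hγ1 : γ < 1)
    {H : Type*} [NormedAddCommGroup H] [InnerProductSpace ℝ H]
    (φ : S → A → H)
    (μ w β : S → A → ℝ)
    (qstar : H)
    (hqstar : qstar =
      (∑ s, ∑ a, ∑ s', (μ s a * Pte s a s' * w s a * β s a) •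
        (φ s a - γ • ∑ a', π s' a' • φ s' a'))
      - (1 - γ) • ∑ s, d0 s • ∑ a, π s a • φ s a)
    (L : H → ℝ)
    (hL : ∀ h : H, L h =
      (∑ s, ∑ a, ∑ s', μ s a * Pte s a s' * w s a * β s a *
        ((⟪h, φ s a⟫ : ℝ) - γ * ∑ a', π s' a' * (⟪h, φ s' a'⟫ : ℝ)))
      - (1 - γ) * ∑ s, d0 s * ∑ a, π s a * (⟪h, φ s a⟫ : ℝ)) :
    (∀ h : H, ‖h‖ ≤ 1 → (L h) ^ 2 ≤ ‖qstar‖ ^ 2) ∧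
    (∃ h : H, ‖h‖ ≤ 1 ∧ (L h) ^ 2 = ‖qstar‖ ^ 2) :=
  rkhs_mis_loss_sup_general Pte π d0 γ φ μ w β qstar hqstar L hL
end

section
/- Let Ω be a finite nonempty type and let p, q : Ω → ℝ satisfy p x > 0 and q x > 0 for all x, ∑_x p x = 1 and ∑_x q x = 1, and suppose K > 0 is a real number with q x ≥ 1/K for all x. Define g x := p x / q x and, for h : Ω → ℝ with h x > 0 for all x, the population loss L(h) := ∑_x q x * h x − ∑_x p x * Real.log (h x). If f : Ω → ℝ satisfies f x > 0 and |f x − g x| ≤ g x for all x, then for every x ∈ Ω: (f x − g x)² ≤ 4 * K * g x * (L(f) − L(g)). -/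
/-! Writing `t = f x / g x` and using `p = q g`, the excess loss `L f - L g` is the sum over `x` of
`q x * g x * (t - 1 - log t)`, a sum of nonnegative terms. The hypothesis `|f - g| ≤ g` means
`t ≤ 2`, and on `(0, 2]` the gap `t - 1 - log t` dominates `(t - 1)² / 4`; so a single term already
gives `q x (f x - g x)² ≤ 4 g x (L f - L g)`, and `K q x ≥ 1` finishes. -/

open Real

-- From `log t = 2 log √t ≤ 2 (√t - 1)`.
lemma log_le_sub_one_sub_sq_div_four_of_le_one {t : ℝ} (ht₀ : 0 < t) (ht₁ : t ≤ 1) :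
    log t ≤ t - 1 - (t - 1) ^ 2 / 4 := by
  set s := √t
  have hs₀ : 0 < s := sqrt_pos.2 ht₀
  have hs₁ : s ≤ 1 := sqrt_le_one.2 ht₁
  have hst : s ^ 2 = t := sq_sqrt ht₀.le
  have hlog : log t = 2 * log s := by rw [log_sqrt ht₀.le]; ring
  rw [hlog, ← hst]
  nlinarith [log_le_sub_one_of_pos hs₀]

-- From `exp y ≥ 1 + y + y² / 2` at `y = (t - 1) - (t - 1)² / 4 ≥ 0`.
lemma log_le_sub_one_sub_sq_div_four_of_le_two {t : ℝ} (ht₁ : 1 ≤ t) (ht₂ : t ≤ 2) :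
    log t ≤ t - 1 - (t - 1) ^ 2 / 4 := by
  rw [log_le_iff_le_exp (by linarith)]
  refine le_trans ?_ (quadratic_le_exp_of_nonneg (by nlinarith))
  nlinarith [mul_nonneg (sub_nonneg.2 ht₁) (sub_nonneg.2 ht₂)]

lemma sq_sub_one_le_four_mul_sub_one_sub_log {t : ℝ} (ht₀ : 0 < t) (ht₂ : t ≤ 2) :
    (t - 1) ^ 2 ≤ 4 * (t - 1 - log t) := by
  have := (le_total t 1).elim (log_le_sub_one_sub_sq_div_four_of_le_one ht₀)
    (log_le_sub_one_sub_sq_div_four_of_le_two · ht₂)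
  linarith

lemma sub_sub_mul_log_div_nonneg {a b : ℝ} (ha : 0 < a) (hb : 0 < b) :
    0 ≤ a - b - b * log (a / b) := by
  have h := mul_le_mul_of_nonneg_left (log_le_sub_one_of_pos (div_pos ha hb)) hb.le
  rw [mul_sub, mul_div_cancel₀ _ hb.ne', mul_one] at h
  linarith

lemma sq_sub_le_four_mul_sub_sub_mul_log_div {a b : ℝ} (ha : 0 < a) (hb : 0 < b)
    (hab : a ≤ 2 * b) : (a - b) ^ 2 ≤ 4 * b * (a - b - b * log (a / b)) := by
  have ht := sq_sub_one_le_four_mul_sub_one_sub_log (div_pos ha hb) ((div_le_iff₀ hb).2 hab)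
  have hsub : a - b = b * (a / b - 1) := by field_simp
  calc (a - b) ^ 2 = b ^ 2 * (a / b - 1) ^ 2 := by rw [hsub]; ring
    _ ≤ b ^ 2 * (4 * (a / b - 1 - log (a / b))) := by gcongr
    _ = 4 * b * (a - b - b * log (a / b)) := by rw [hsub]; ring

lemma excess_loss_eq_sum {Ω : Type*} [Fintype Ω] {p q f g : Ω → ℝ}
    (hpq : ∀ x, p x = q x * g x) (hf : ∀ x, 0 < f x) (hg : ∀ x, 0 < g x) :
    ((∑ x, q x * f x) - ∑ x, p x * log (f x)) - ((∑ x, q x * g x) - ∑ x, p x * log (g x)) =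
      ∑ x, q x * (f x - g x - g x * log (f x / g x)) := by
  simp only [← Finset.sum_sub_distrib]
  refine Finset.sum_congr rfl fun x _ => ?_
  rw [hpq, log_div (hf x).ne' (hg x).ne']
  ring

theorem density_ratio_pointwise_error_bound_general
    {Ω : Type*} [Fintype Ω]
    (p q : Ω → ℝ)
    (hp : ∀ x, 0 < p x) (hq : ∀ x, 0 < q x)
    (K : ℝ) (hK : 0 < K) (hqK : ∀ x, 1 / K ≤ q x)
    (g : Ω → ℝ) (hg : ∀ x, g x = p x / q x)
    (L : (Ω → ℝ) → ℝ)
    (hL : ∀ h : Ω → ℝ, L h = (∑ x, q x * h x) - ∑ x, p x * Real.log (h x))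
    (f : Ω → ℝ) (hf_pos : ∀ x, 0 < f x)
    (hf_close : ∀ x, |f x - g x| ≤ g x) :
    ∀ x, (f x - g x) ^ 2 ≤ 4 * K * g x * (L f - L g) := by
  intro x
  have hg_pos y : 0 < g y := hg y ▸ div_pos (hp y) (hq y)
  have hpq y : p y = q y * g y := by rw [hg y, mul_div_cancel₀ _ (hq y).ne']
  set D : Ω → ℝ := fun y => f y - g y - g y * log (f y / g y)
  have hexcess : L f - L g = ∑ y, q y * D y := by
    rw [hL, hL]; exact excess_loss_eq_sum hpq hf_pos hg_pos
  have hterm : q x * D x ≤ L f - L g := hexcess ▸ Finset.single_le_sum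
    (fun y _ => mul_nonneg (hq y).le (sub_sub_mul_log_div_nonneg (hf_pos y) (hg_pos y)))
    (Finset.mem_univ x)
  have hD : (f x - g x) ^ 2 ≤ 4 * g x * D x :=
    sq_sub_le_four_mul_sub_sub_mul_log_div (hf_pos x) (hg_pos x)
      (by linarith [(abs_le.1 (hf_close x)).2])
  have hKq : 1 ≤ K * q x := by rw [← div_le_iff₀' hK]; exact hqK x
  have hgx := hg_pos x
  calc (f x - g x) ^ 2 ≤ K * q x * (f x - g x) ^ 2 := le_mul_of_one_le_left (sq_nonneg _) hKq
    _ ≤ K * q x * (4 * g x * D x) := by gcongr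
    _ = 4 * K * g x * (q x * D x) := by ring
    _ ≤ 4 * K * g x * (L f - L g) := by gcongr

/-- Pointwise estimation-error bound for direct density-ratio estimation: the
squared pointwise error of an estimate `f` of the ratio `g = p/q` is controlled
by its excess population loss `L(f) − L(g)`. -/
theorem density_ratio_pointwise_error_bound
    {Ω : Type*} [Fintype Ω] [Nonempty Ω]
    (p q : Ω → ℝ)
    (hp : ∀ x, 0 < p x) (hq : ∀ x, 0 < q x)
    (hps : ∑ x, p x = 1) (hqs : ∑ x, q x = 1)
    (K : ℝ) (hK : 0 < K) (hqK : ∀ x, 1 / K ≤ q x)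
    (g : Ω → ℝ) (hg : ∀ x, g x = p x / q x)
    (L : (Ω → ℝ) → ℝ)
    (hL : ∀ h : Ω → ℝ, L h = (∑ x, q x * h x) - ∑ x, p x * Real.log (h x))
    (f : Ω → ℝ) (hf_pos : ∀ x, 0 < f x)
    (hf_close : ∀ x, |f x - g x| ≤ g x) :
    ∀ x, (f x - g x) ^ 2 ≤ 4 * K * g x * (L f - L g) :=
  density_ratio_pointwise_error_bound_general p q hp hq K hK hqK g hg L hL f hf_pos hf_close
end
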